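/- arXiv:0903.5276 — 2 statements merged into one kernel-verified Lean document; each statement's English description precedes it below -/
import Mathlib

section
/- Let ρ be as above and for ε > 0 define f : ℝ³ → ℝ by f(x) = ρ(|x|)/(1 + ε ρ(|x|)). Then f is twice continuously differentiable on ℝ³ and satisfies ‖∇f‖_∞ < 1. -/
noncomputable def rho (z : ℝ) : ℝ := if z < 1 then z ^ 2 - z ^ 3 / 3 else z - 1 / 3

noncomputable def fweight (ε : ℝ) (x : EuclideanSpace ℝ (Fin 3)) : ℝ :=
  rho ‖x‖ / (1 + ε * rho ‖x‖)

/-!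
Write ρ(z) = z² - z³/3 + max(z - 1, 0)³/3 and max(t, 0)³ = (t³ + |t|³)/2. Away from the origin
everything is smooth, and near it max(‖x‖ - 1, 0)³ vanishes, so the only delicate term is ‖x‖³.
Its derivative is 3⟪‖x‖ x, ·⟫, and x ↦ ‖x‖ x is C¹: its derivative ‖x‖ id + ‖x‖⁻¹ ⟪x, ·⟫ x has
norm at most 2‖x‖, hence is continuous at 0.

For the gradient, f = g ∘ ‖·‖ with g = ρ / (1 + ερ), and 0 ≤ g' = ρ' / (1 + ερ)². On [0, 1/2]
we have ρ' ≤ 3/4, and beyond 1/2 we have ρ' ≤ 1 and ρ ≥ 5/24, so g' ≤ max (3/4) (1 / (1 + 5ε/24)).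
Thus f is Lipschitz with that constant, which bounds ‖Df‖.
-/

open Filter Asymptotics

section

variable {E : Type*} [NormedAddCommGroup E] [InnerProductSpace ℝ E]

theorem hasFDerivAt_norm_of_ne_zero {x : E} (hx : x ≠ 0) :
    HasFDerivAt (fun y : E => ‖y‖) (‖x‖⁻¹ • innerSL ℝ x) x := by
  have h := (hasStrictFDerivAt_norm_sq x).hasFDerivAt.sqrt (pow_ne_zero 2 (norm_ne_zero_iff.2 hx))
  simp only [Real.sqrt_sq (norm_nonneg _)] at h
  convert h using 1
  rw [← Nat.cast_smul_eq_nsmul ℝ, smul_smul]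
  congr 1
  field_simp
  norm_num

theorem hasFDerivAt_norm_smul_self (x : E) :
    HasFDerivAt (fun y : E => ‖y‖ • y)
      (‖x‖ • ContinuousLinearMap.id ℝ E + (‖x‖⁻¹ • innerSL ℝ x).smulRight x) x := by
  -- at `x = 0` the formula degenerates to `0` because `‖0‖⁻¹ = 0`
  rcases eq_or_ne x 0 with rfl | hx
  · simp only [norm_zero, inv_zero, zero_smul, zero_add]
    rw [hasFDerivAt_iff_isLittleO_nhds_zero, ← isLittleO_norm_left]
    simpa [norm_smul, sq] using (isLittleO_norm_pow_id (E' := E) one_lt_two)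
  · exact (hasFDerivAt_norm_of_ne_zero hx).smul (hasFDerivAt_id x)

theorem norm_smulRight_innerSL_le (x : E) :
    ‖(‖x‖⁻¹ • innerSL ℝ x).smulRight x‖ ≤ ‖x‖ := by
  rw [ContinuousLinearMap.norm_smulRight_apply, norm_smul, innerSL_apply_norm, norm_inv, norm_norm]
  rcases eq_or_ne x 0 with rfl | hx
  · simp
  · rw [inv_mul_cancel₀ (norm_ne_zero_iff.2 hx), one_mul]

theorem continuous_smulRight_innerSL :
    Continuous fun x : E => (‖x‖⁻¹ • innerSL ℝ x).smulRight x := by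
  refine continuous_iff_continuousAt.2 fun x => ?_
  rcases eq_or_ne x 0 with rfl | hx
  · rw [ContinuousAt, norm_zero, inv_zero, zero_smul, ContinuousLinearMap.zero_smulRight]
    exact squeeze_zero_norm norm_smulRight_innerSL_le (continuous_norm.tendsto' 0 0 norm_zero)
  · exact (ContinuousLinearMap.smulRightL ℝ E E).continuous₂.continuousAt.comp
      (((continuous_norm.continuousAt.inv₀ (norm_ne_zero_iff.2 hx)).smul
        (innerSL ℝ).continuous.continuousAt).prodMk continuousAt_id)

theorem contDiff_norm_smul_self : ContDiff ℝ 1 fun x : E => ‖x‖ • x :=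
  contDiff_one_iff_hasFDerivAt.2 ⟨_,
    (continuous_norm.smul continuous_const).add continuous_smulRight_innerSL,
    hasFDerivAt_norm_smul_self⟩

theorem hasFDerivAt_norm_pow_three (x : E) :
    HasFDerivAt (fun y : E => ‖y‖ ^ 3) ((3 : ℝ) • innerSL ℝ (‖x‖ • x)) x := by
  convert hasFDerivAt_norm_rpow x (p := 3) (by norm_num) using 1
  · ext y
    exact_mod_cast (Real.rpow_natCast ‖y‖ 3).symm
  · rw [map_smul, smul_smul]
    norm_num

theorem contDiff_norm_pow_three : ContDiff ℝ 2 fun x : E => ‖x‖ ^ 3 :=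
  contDiff_succ_iff_hasFDerivAt.2 ⟨_,
    ((innerSL ℝ).contDiff.comp contDiff_norm_smul_self).const_smul (3 : ℝ),
    hasFDerivAt_norm_pow_three⟩

theorem contDiff_comp_norm_of_const_near_zero {q : ℝ → ℝ} {r : ℝ} {n : WithTop ℕ∞}
    (hq : ContDiff ℝ n q) (hr : 0 < r) (hq_const : ∀ t < r, q t = q 0) :
    ContDiff ℝ n fun x : E => q ‖x‖ := by
  refine contDiff_iff_contDiffAt.2 fun x => ?_
  rcases lt_or_ge ‖x‖ r with hx | hx
  · refine (contDiffAt_const (c := q 0)).congr_of_eventuallyEq ?_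
    filter_upwards [continuous_norm.continuousAt.eventually_lt continuousAt_const hx] with y hy
    exact hq_const _ hy
  · have hx0 : x ≠ 0 := norm_pos_iff.1 (hr.trans_le hx)
    exact hq.contDiffAt.comp x (contDiffAt_norm ℝ hx0)

end

section

variable {E : Type*} [NormedAddCommGroup E] [NormedSpace ℝ E]

theorem norm_fderiv_comp_norm_le {g g' : ℝ → ℝ} {C : ℝ}
    (hg : ∀ z, 0 ≤ z → HasDerivAt g (g' z) z) (hg' : ∀ z, 0 ≤ z → ‖g' z‖ ≤ C) (x : E) :
    ‖fderiv ℝ (fun x : E => g ‖x‖) x‖ ≤ C := by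
  have hC : 0 ≤ C := (norm_nonneg _).trans (hg' 0 le_rfl)
  refine norm_fderiv_le_of_lip' ℝ hC (Eventually.of_forall fun y => ?_)
  calc ‖g ‖y‖ - g ‖x‖‖ ≤ C * ‖‖y‖ - ‖x‖‖ :=
        (convex_Ici 0).norm_image_sub_le_of_norm_hasDerivWithin_le
          (fun z hz => (hg z hz).hasDerivWithinAt) hg' (norm_nonneg x) (norm_nonneg y)
    _ ≤ C * ‖y - x‖ := mul_le_mul_of_nonneg_left (abs_norm_sub_norm_le y x) hC

end

theorem max_zero_pow_three_eq (t : ℝ) : max t 0 ^ 3 = (t ^ 3 + ‖t‖ ^ 3) / 2 := by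
  rcases le_total t 0 with ht | ht
  · rw [max_eq_right ht, Real.norm_of_nonpos ht]; ring
  · rw [max_eq_left ht, Real.norm_of_nonneg ht]; ring

theorem contDiff_max_zero_pow_three : ContDiff ℝ 2 fun t : ℝ => max t 0 ^ 3 := by
  simp_rw [max_zero_pow_three_eq]
  exact ((contDiff_id.pow 3).add contDiff_norm_pow_three).div_const 2

theorem hasDerivAt_max_zero_pow_three (t : ℝ) :
    HasDerivAt (fun t : ℝ => max t 0 ^ 3) (3 * max t 0 ^ 2) t := by
  simp_rw [max_zero_pow_three_eq]
  refine (((hasDerivAt_pow 3 t).add (hasFDerivAt_norm_pow_three t).hasDerivAt).div_const 2).congr_deriv ?_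
  simp only [FunLike.coe_smul, Pi.smul_apply, innerSL_apply_apply, RCLike.inner_apply,
    conj_trivial, smul_eq_mul]
  rcases le_total t 0 with ht | ht
  · rw [max_eq_right ht, Real.norm_of_nonpos ht]; ring
  · rw [max_eq_left ht, Real.norm_of_nonneg ht]; ring


theorem rho_eq (z : ℝ) : rho z = z ^ 2 - z ^ 3 / 3 + max (z - 1) 0 ^ 3 / 3 := by
  unfold rho
  split_ifs with hz
  · rw [max_eq_right (by linarith)]; ring
  · rw [max_eq_left (by linarith)]; ring

theorem rho_nonneg (z : ℝ) : 0 ≤ rho z := by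
  unfold rho
  split_ifs with hz
  · nlinarith [mul_nonneg (sq_nonneg z) (by linarith : (0 : ℝ) ≤ 3 - z)]
  · linarith

theorem five_div_twentyFour_le_rho {z : ℝ} (hz : 1 / 2 ≤ z) : 5 / 24 ≤ rho z := by
  unfold rho
  split_ifs with h
  · nlinarith [mul_nonneg (by linarith : (0 : ℝ) ≤ z - 1 / 2) (by linarith : (0 : ℝ) ≤ 1 - z)]
  · linarith

noncomputable def rhoDeriv (z : ℝ) : ℝ := 2 * z - z ^ 2 + max (z - 1) 0 ^ 2

theorem hasDerivAt_rho (z : ℝ) : HasDerivAt rho (rhoDeriv z) z := by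
  have h := (((hasDerivAt_pow 2 z).sub ((hasDerivAt_pow 3 z).div_const 3)).add
    (((hasDerivAt_max_zero_pow_three (z - 1)).comp z ((hasDerivAt_id z).sub_const 1)).div_const 3))
  rw [show rho = fun z => z ^ 2 - z ^ 3 / 3 + max (z - 1) 0 ^ 3 / 3 from funext rho_eq]
  refine h.congr_deriv ?_
  simp only [rhoDeriv]
  push_cast
  ring

theorem rhoDeriv_nonneg {z : ℝ} (hz : 0 ≤ z) : 0 ≤ rhoDeriv z := by
  unfold rhoDeriv
  rcases le_total z 1 with h | h
  · rw [max_eq_right (by linarith)]; nlinarith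
  · rw [max_eq_left (by linarith)]; nlinarith

theorem rhoDeriv_le_one (z : ℝ) : rhoDeriv z ≤ 1 := by
  unfold rhoDeriv
  rcases le_total z 1 with h | h
  · rw [max_eq_right (by linarith)]; nlinarith [sq_nonneg (z - 1)]
  · rw [max_eq_left (by linarith)]; nlinarith

theorem rhoDeriv_le_three_div_four {z : ℝ} (hz : z ≤ 1 / 2) : rhoDeriv z ≤ 3 / 4 := by
  unfold rhoDeriv
  rw [max_eq_right (by linarith)]
  nlinarith [sq_nonneg (z - 1 / 2)]

theorem contDiff_rho_norm {E : Type*} [NormedAddCommGroup E] [InnerProductSpace ℝ E] :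
    ContDiff ℝ 2 fun x : E => rho ‖x‖ := by
  simp_rw [rho_eq]
  have hmax : ContDiff ℝ 2 fun x : E => max (‖x‖ - 1) 0 ^ 3 :=
    contDiff_comp_norm_of_const_near_zero (q := fun t => max (t - 1) 0 ^ 3)
      (contDiff_max_zero_pow_three.comp (contDiff_id.sub contDiff_const)) one_pos
      fun t ht => by simp [max_eq_right (by linarith : t - 1 ≤ 0)]
  exact ((contDiff_norm_sq ℝ).sub (contDiff_norm_pow_three.div_const 3)).add (hmax.div_const 3)

theorem one_add_mul_rho_pos {ε : ℝ} (hε : 0 ≤ ε) (z : ℝ) : 0 < 1 + ε * rho z := by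
  have := mul_nonneg hε (rho_nonneg z)
  linarith

theorem hasDerivAt_rho_div {ε : ℝ} (hε : 0 ≤ ε) (z : ℝ) :
    HasDerivAt (fun z => rho z / (1 + ε * rho z)) (rhoDeriv z / (1 + ε * rho z) ^ 2) z := by
  have h := hasDerivAt_rho z
  refine (h.div ((h.const_mul ε).const_add 1) (one_add_mul_rho_pos hε z).ne').congr_deriv ?_
  ring

theorem rhoDeriv_div_le {ε : ℝ} (hε : 0 ≤ ε) {z : ℝ} (hz : 0 ≤ z) :
    rhoDeriv z / (1 + ε * rho z) ^ 2 ≤ max (3 / 4) (1 / (1 + ε * (5 / 24))) := by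
  have hρ := mul_nonneg hε (rho_nonneg z)
  rcases le_or_gt z (1 / 2) with h | h
  · calc rhoDeriv z / (1 + ε * rho z) ^ 2 ≤ rhoDeriv z :=
          div_le_self (rhoDeriv_nonneg hz) (by nlinarith)
      _ ≤ 3 / 4 := rhoDeriv_le_three_div_four h
      _ ≤ _ := le_max_left _ _
  · have hden : 1 + ε * (5 / 24) ≤ (1 + ε * rho z) ^ 2 := by
      nlinarith [mul_le_mul_of_nonneg_left (five_div_twentyFour_le_rho h.le) hε]
    calc rhoDeriv z / (1 + ε * rho z) ^ 2 ≤ 1 / (1 + ε * (5 / 24)) :=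
          div_le_div₀ zero_le_one (rhoDeriv_le_one z) (by positivity) hden
      _ ≤ _ := le_max_right _ _

theorem fweight_contDiff_and_grad_lt_one (ε : ℝ) (hε : 0 < ε) :
    ContDiff ℝ 2 (fweight ε) ∧
    ∃ c < (1 : ℝ), ∀ x, ‖fderiv ℝ (fweight ε) x‖ ≤ c := by
  refine ⟨contDiff_rho_norm.div (contDiff_const.add (contDiff_const.mul contDiff_rho_norm))
    fun x => (one_add_mul_rho_pos hε.le ‖x‖).ne', ?_⟩
  refine ⟨max (3 / 4) (1 / (1 + ε * (5 / 24))), max_lt (by norm_num) ?_, fun x => ?_⟩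
  · rw [div_lt_one (by positivity)]
    linarith
  · refine norm_fderiv_comp_norm_le (fun z _ => hasDerivAt_rho_div hε.le z) (fun z hz => ?_) x
    rw [Real.norm_of_nonneg (div_nonneg (rhoDeriv_nonneg hz) (sq_nonneg _))]
    exact rhoDeriv_div_le hε.le hz
end

section
/- (Schur test) Let A : ℝ^d × ℝ^d → ℂ be measurable with M₁ := sup_y ∫ |A(x,y)| dx < ∞ and M₂ := sup_x ∫ |A(x,y)| dy < ∞. Then the integral operator (Aψ)(x) = ∫ A(x,y) ψ(y) dy is bounded on L²(ℝ^d) with operator norm at most √(M₁ M₂). -/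
/-! Cauchy–Schwarz against the weight `|A(x, ·)|` gives
`|Aψ(x)|² ≤ M₂ ∫ |A(x,y)| |ψ(y)|² dy`; integrating in `x` and exchanging the order of integration
bounds `‖Aψ‖₂²` by `M₂ M₁ ‖ψ‖₂²`. Working with `ℝ≥0∞`-valued integrals throughout avoids any
integrability side conditions. -/

open MeasureTheory ENNReal

namespace MeasureTheory

variable {α β : Type*} [MeasurableSpace α] [MeasurableSpace β] {μ : Measure α} {ν : Measure β}

theorem sq_lintegral_mul_le {k g : β → ℝ≥0∞} (hk : AEMeasurable k ν) (hg : AEMeasurable g ν) :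
    (∫⁻ y, k y * g y ∂ν) ^ 2 ≤ (∫⁻ y, k y ∂ν) * ∫⁻ y, k y * g y ^ 2 ∂ν := by
  have half_add_half : (1 / 2 : ℝ) + 1 / 2 = 1 := by norm_num
  have holder := lintegral_mul_norm_pow_le (g := fun y => k y * g y ^ 2) hk
    (hk.mul (hg.pow_const 2)) (by norm_num) (by norm_num) half_add_half
  have hsplit : ∀ y, k y ^ (1 / 2 : ℝ) * (k y * g y ^ 2) ^ (1 / 2 : ℝ) = k y * g y := by
    intro y
    rw [ENNReal.mul_rpow_of_nonneg _ _ (by norm_num), ← mul_assoc,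
      ← ENNReal.rpow_add_of_nonneg _ _ (by norm_num) (by norm_num), half_add_half,
      ENNReal.rpow_one, ← ENNReal.rpow_natCast, ← ENNReal.rpow_mul]
    norm_num
  simp only [hsplit] at holder
  calc (∫⁻ y, k y * g y ∂ν) ^ 2
      ≤ ((∫⁻ y, k y ∂ν) ^ (1 / 2 : ℝ) * (∫⁻ y, k y * g y ^ 2 ∂ν) ^ (1 / 2 : ℝ)) ^ 2 := by
        gcongr
    _ = (∫⁻ y, k y ∂ν) * ∫⁻ y, k y * g y ^ 2 ∂ν := by
        rw [mul_pow, ← ENNReal.rpow_mul_natCast, ← ENNReal.rpow_mul_natCast]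
        norm_num

theorem lintegral_lintegral_mul_le [SFinite μ] [SFinite ν] {k : α → β → ℝ≥0∞}
    (hk : Measurable (Function.uncurry k)) {g : β → ℝ≥0∞} (hg : AEMeasurable g ν) {C : ℝ≥0∞}
    (hC : ∀ y, ∫⁻ x, k x y ∂μ ≤ C) :
    ∫⁻ x, ∫⁻ y, k x y * g y ∂ν ∂μ ≤ C * ∫⁻ y, g y ∂ν := by
  rw [lintegral_lintegral_swap (hk.aemeasurable.mul hg.comp_snd), ← lintegral_const_mul'' _ hg]
  refine lintegral_mono fun y => ?_
  rw [lintegral_mul_const _ hk.of_uncurry_right]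
  exact mul_le_mul_left (hC y) _

theorem eLpNorm_two_sq_eq_lintegral {E : Type*} [NormedAddCommGroup E] (f : α → E) :
    eLpNorm f 2 μ ^ 2 = ∫⁻ x, ‖f x‖ₑ ^ 2 ∂μ := by
  simpa using eLpNorm_nnreal_pow_eq_lintegral (f := f) (μ := μ) (p := 2) two_ne_zero

variable {𝕜 E : Type*} [NormedField 𝕜] [MeasurableSpace 𝕜] [OpensMeasurableSpace 𝕜]
  [NormedAddCommGroup E] [NormedSpace 𝕜 E] [NormedSpace ℝ E]

theorem sq_eLpNorm_integral_smul_le [SFinite μ] [SFinite ν] {K : α → β → 𝕜}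
    (hK : Measurable (Function.uncurry K)) {C₁ C₂ : ℝ≥0∞}
    (h₁ : ∀ y, ∫⁻ x, ‖K x y‖ₑ ∂μ ≤ C₁) (h₂ : ∀ x, ∫⁻ y, ‖K x y‖ₑ ∂ν ≤ C₂)
    {f : β → E} (hf : AEStronglyMeasurable f ν) :
    eLpNorm (fun x => ∫ y, K x y • f y ∂ν) 2 μ ^ 2 ≤ C₁ * C₂ * eLpNorm f 2 ν ^ 2 := by
  have hk : Measurable (Function.uncurry fun x y => ‖K x y‖ₑ) := hK.enorm
  have pointwise : ∀ x, ‖∫ y, K x y • f y ∂ν‖ₑ ^ 2 ≤ C₂ * ∫⁻ y, ‖K x y‖ₑ * ‖f y‖ₑ ^ 2 ∂ν := by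
    intro x
    calc ‖∫ y, K x y • f y ∂ν‖ₑ ^ 2
        ≤ (∫⁻ y, ‖K x y‖ₑ * ‖f y‖ₑ ∂ν) ^ 2 := by
          gcongr
          exact (enorm_integral_le_lintegral_enorm _).trans (lintegral_mono fun y => enorm_smul_le)
      _ ≤ (∫⁻ y, ‖K x y‖ₑ ∂ν) * ∫⁻ y, ‖K x y‖ₑ * ‖f y‖ₑ ^ 2 ∂ν :=
          sq_lintegral_mul_le hK.of_uncurry_left.enorm.aemeasurable hf.enorm
      _ ≤ C₂ * ∫⁻ y, ‖K x y‖ₑ * ‖f y‖ₑ ^ 2 ∂ν := by gcongr; exact h₂ x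
  have hinner : AEMeasurable (fun x => ∫⁻ y, ‖K x y‖ₑ * ‖f y‖ₑ ^ 2 ∂ν) μ :=
    (hk.aemeasurable.mul (hf.enorm.pow_const 2).comp_snd).lintegral_prod_right'
  calc eLpNorm (fun x => ∫ y, K x y • f y ∂ν) 2 μ ^ 2
      = ∫⁻ x, ‖∫ y, K x y • f y ∂ν‖ₑ ^ 2 ∂μ := eLpNorm_two_sq_eq_lintegral _
    _ ≤ ∫⁻ x, C₂ * ∫⁻ y, ‖K x y‖ₑ * ‖f y‖ₑ ^ 2 ∂ν ∂μ := lintegral_mono pointwise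
    _ = C₂ * ∫⁻ x, ∫⁻ y, ‖K x y‖ₑ * ‖f y‖ₑ ^ 2 ∂ν ∂μ := lintegral_const_mul'' _ hinner
    _ ≤ C₂ * (C₁ * ∫⁻ y, ‖f y‖ₑ ^ 2 ∂ν) := by
        gcongr
        exact lintegral_lintegral_mul_le hk (hf.enorm.pow_const 2) h₁
    _ = C₁ * C₂ * eLpNorm f 2 ν ^ 2 := by rw [eLpNorm_two_sq_eq_lintegral]; ring

end MeasureTheory

theorem ENNReal.ofReal_mul_ofReal_le_sq_ofReal_sqrt (a b : ℝ) :
    ENNReal.ofReal a * ENNReal.ofReal b ≤ ENNReal.ofReal (Real.sqrt (a * b)) ^ 2 := by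
  rw [← ENNReal.ofReal_pow (Real.sqrt_nonneg _), Real.sq_sqrt']
  rcases le_or_gt 0 a with ha | ha
  · rw [← ENNReal.ofReal_mul ha]
    exact ENNReal.ofReal_le_ofReal (le_max_left _ _)
  · simp [ENNReal.ofReal_of_nonpos ha.le]

theorem schur_test (d : ℕ)
    (A : EuclideanSpace ℝ (Fin d) → EuclideanSpace ℝ (Fin d) → ℂ)
    (hA : Measurable (Function.uncurry A)) (M₁ M₂ : ℝ)
    (h1 : ∀ y, ∫⁻ x, (‖A x y‖₊ : ℝ≥0∞) ≤ ENNReal.ofReal M₁)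
    (h2 : ∀ x, ∫⁻ y, (‖A x y‖₊ : ℝ≥0∞) ≤ ENNReal.ofReal M₂)
    (ψ : EuclideanSpace ℝ (Fin d) → ℂ) (hψ : MemLp ψ 2 volume) :
    eLpNorm (fun x => ∫ y, A x y * ψ y) 2 volume ≤
      ENNReal.ofReal (Real.sqrt (M₁ * M₂)) * eLpNorm ψ 2 volume := by
  rw [← ENNReal.pow_le_pow_left_iff two_ne_zero, mul_pow]
  calc eLpNorm (fun x => ∫ y, A x y * ψ y) 2 volume ^ 2
      ≤ ENNReal.ofReal M₁ * ENNReal.ofReal M₂ * eLpNorm ψ 2 volume ^ 2 :=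
        sq_eLpNorm_integral_smul_le hA h1 h2 hψ.aestronglyMeasurable
    _ ≤ ENNReal.ofReal (Real.sqrt (M₁ * M₂)) ^ 2 * eLpNorm ψ 2 volume ^ 2 := by
        gcongr
        exact ENNReal.ofReal_mul_ofReal_le_sq_ofReal_sqrt M₁ M₂
end
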